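/- A rule of the form 'not L_{k+1};...;not L_l ← L_{l+1},...,L_m, not L_{m+1},...,not L_n' (empty positive head) is strongly equivalent under the answer set semantics to the constraint '← L_{k+1},...,L_l, L_{l+1},...,L_m, not L_{m+1},...,not L_n' obtained by shifting the default-negated head literals into the positive body: for any program Π, replacing all such rules by their shifted constraints yields a program with the same answer sets. -/
import Mathlib


/-- Literals over atoms (ℕ): positive or explicitly negated. -/
inductive Lit where
  | pos : ℕ → Lit
  | neg : ℕ → Lit
deriving DecidableEq

/-- Explicit negation (¬¬L = L). -/
def Lit.compl : Lit → Lit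
  | .pos n => .neg n
  | .neg n => .pos n

/-- A GEDP rule: head⁺ ; not head⁻ ← body⁺ , not body⁻. -/
structure Rule where
  headPos : Set Lit
  headNeg : Set Lit
  bodyPos : Set Lit
  bodyNeg : Set Lit

abbrev Program := Set Rule

/-- A not-free rule: head ← body over literals. -/
structure NFRule where
  head : Set Lit
  body : Set Lit

/-- S satisfies a not-free rule. -/
def NFRule.sat (S : Set Lit) (r : NFRule) : Prop :=
  r.body ⊆ S → (r.head ∩ S).Nonempty

/-- Candidate for answer set of a not-free program: satisfies all rules and
    contains a complementary pair only if it is Lit (= Set.univ). -/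
def candNF (P : Set NFRule) (S : Set Lit) : Prop :=
  (∀ r ∈ P, NFRule.sat S r) ∧ ((∃ L, L ∈ S ∧ Lit.compl L ∈ S) → S = Set.univ)

/-- Answer set of a not-free program: a minimal candidate. -/
def isAnswerSetNF (P : Set NFRule) (S : Set Lit) : Prop :=
  candNF P S ∧ ∀ T, candNF P T → T ⊆ S → T = S

/-- Reduct Π^S of a GEDP. -/
def reduct (P : Program) (S : Set Lit) : Set NFRule :=
  { nr | ∃ r ∈ P, r.headNeg ⊆ S ∧ r.bodyNeg ∩ S = ∅ ∧ nr = ⟨r.headPos, r.bodyPos⟩ }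

/-- Answer set of a GEDP. -/
def isAnswerSet (P : Program) (S : Set Lit) : Prop :=
  isAnswerSetNF (reduct P S) S

/-- Π is contradictory iff Lit is its answer set. -/
def contradictory (P : Program) : Prop := isAnswerSet P Set.univ

/-- Π is consistent iff it has a consistent answer set. -/
def consistentProgram (P : Program) : Prop := ∃ S, isAnswerSet P S ∧ S ≠ Set.univ

def hasBody (r : Rule) : Prop := (r.bodyPos ∪ r.bodyNeg).Nonempty

/-- Rules of Π with (NAF-)literal (L if pos, not L otherwise) in the head and nonempty body. -/
def headOcc (P : Program) (L : Lit) (pos : Bool) : Set Rule :=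
  {r ∈ P | (if pos then L ∈ r.headPos else L ∈ r.headNeg) ∧ hasBody r}

/-- f chooses one body element (literal: true, NAF-literal: false) from each rule of R. -/
def isChoice (R : Set Rule) (f : Rule → Lit × Bool) : Prop :=
  ∀ r ∈ R, ((f r).2 = true ∧ (f r).1 ∈ r.bodyPos) ∨ ((f r).2 = false ∧ (f r).1 ∈ r.bodyNeg)

/-- AC completion rules: unfolding Σ₁;…;Σ_p ← ℓ into GEDP rules by choice functions. -/
def acRules (P : Program) : Program :=
  { r' | ∃ (L : Lit) (pos : Bool) (f : Rule → Lit × Bool),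
      (headOcc P L pos).Nonempty ∧ isChoice (headOcc P L pos) f ∧
      r' = ⟨{l | ∃ r ∈ headOcc P L pos, f r = (l, true)},
            {l | ∃ r ∈ headOcc P L pos, f r = (l, false)},
            (if pos then {L} else ∅),
            (if pos then ∅ else {L})⟩ }

def AC (P : Program) : Program := P ∪ acRules P

/-- Weak DC contrapositive of a rule. -/
def wdc (r : Rule) : Rule := ⟨r.bodyNeg, r.bodyPos, r.headNeg, r.headPos⟩

def WDC (P : Program) : Program := P ∪ wdc '' P

/-- Strong DC contrapositive of a rule. -/
def sdc (r : Rule) : Rule :=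
  ⟨(Lit.compl '' r.bodyPos) ∪ r.bodyNeg, ∅, (Lit.compl '' r.headPos) ∪ r.headNeg, ∅⟩

def SDC (P : Program) : Program := P ∪ sdc '' P

/-- Weak DA completion rules: not Lᵢ ← Γ₁,…,Γ_p (resp. Lᵢ ← …), unfolded by choices. -/
def wdaRules (P : Program) : Program :=
  { r' | ∃ (L : Lit) (pos : Bool) (f : Rule → Lit × Bool),
      (headOcc P L pos).Nonempty ∧ isChoice (headOcc P L pos) f ∧
      r' = ⟨(if pos then ∅ else {L}),
            (if pos then {L} else ∅),
            {l | ∃ r ∈ headOcc P L pos, f r = (l, false)},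
            {l | ∃ r ∈ headOcc P L pos, f r = (l, true)}⟩ }

def WDA (P : Program) : Program := P ∪ wdaRules P

/-- Strong DA completion rules: ¬Lᵢ ← Γ₁,…,Γ_p (resp. Lᵢ ← …), unfolded by choices. -/
def sdaRules (P : Program) : Program :=
  { r' | ∃ (L : Lit) (pos : Bool) (f : Rule → Lit × Bool),
      (headOcc P L pos).Nonempty ∧ isChoice (headOcc P L pos) f ∧
      r' = ⟨(if pos then {Lit.compl L} else {L}), ∅,
            {l | ∃ r ∈ headOcc P L pos, (f r = (Lit.compl l, true) ∨ f r = (l, false))},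
            ∅⟩ }

def SDA (P : Program) : Program := P ∪ sdaRules P

/-- Default AC completion rules: AC rules with the default guard Δᵢ of one body Σᵢ. -/
def dacRules (P : Program) : Program :=
  { r' | ∃ (L : Lit) (pos : Bool) (f : Rule → Lit × Bool) (r0 : Rule),
      r0 ∈ headOcc P L pos ∧ isChoice (headOcc P L pos) f ∧
      r' = ⟨{l | ∃ r ∈ headOcc P L pos, f r = (l, true)},
            {l | ∃ r ∈ headOcc P L pos, f r = (l, false)},
            (if pos then {L} else ∅),
            (if pos then ∅ else {L}) ∪ (Lit.compl '' r0.bodyPos) ∪ r0.bodyNeg⟩ }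

def DAC (P : Program) : Program := P ∪ dacRules P

/-- Weak default DA completion rules: WDA rules with guard δʷ. -/
def wddaRules (P : Program) : Program :=
  { r' | ∃ (L : Lit) (pos : Bool) (f : Rule → Lit × Bool),
      (headOcc P L pos).Nonempty ∧ isChoice (headOcc P L pos) f ∧
      r' = ⟨(if pos then ∅ else {L}),
            (if pos then {L} else ∅),
            {l | ∃ r ∈ headOcc P L pos, f r = (l, false)},
            {l | ∃ r ∈ headOcc P L pos, f r = (l, true)} ∪ {if pos then L else Lit.compl L}⟩ }

def WDDA (P : Program) : Program := P ∪ wddaRules P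

/-- Strong default DA completion rules: SDA rules with guard δˢ. -/
def sddaRules (P : Program) : Program :=
  { r' | ∃ (L : Lit) (pos : Bool) (f : Rule → Lit × Bool),
      (headOcc P L pos).Nonempty ∧ isChoice (headOcc P L pos) f ∧
      r' = ⟨(if pos then {Lit.compl L} else {L}), ∅,
            {l | ∃ r ∈ headOcc P L pos, (f r = (Lit.compl l, true) ∨ f r = (l, false))},
            {if pos then L else Lit.compl L}⟩ }

def SDDA (P : Program) : Program := P ∪ sddaRules P

/-- The fact L ←. -/
def factOf (L : Lit) : Rule := ⟨{L}, ∅, ∅, ∅⟩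

def isFact (r : Rule) : Prop := r.bodyPos = ∅ ∧ r.bodyNeg = ∅

def isAtom (L : Lit) : Prop := ∃ n, L = Lit.pos n

/-- Positive disjunctive program: no default negation, only atoms. -/
def isPDP (P : Program) : Prop :=
  ∀ r ∈ P, r.headNeg = ∅ ∧ r.bodyNeg = ∅ ∧ (∀ L ∈ r.headPos ∪ r.bodyPos, isAtom L)

def isEDP (P : Program) : Prop := ∀ r ∈ P, r.headNeg = ∅

/-- Shifting the default-negated head of a rule with empty positive head into the body. -/
def shiftRule (r : Rule) : Rule := ⟨∅, ∅, r.headNeg ∪ r.bodyPos, r.bodyNeg⟩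

lemma sat_mono_empty (nr : NFRule) (h : nr.head = ∅) {S T : Set Lit}
    (hTS : T ⊆ S) (hS : NFRule.sat S nr) : NFRule.sat T nr := by
  intro hb
  have := hS (hb.trans hTS)
  simp [h] at this

lemma satP_to_satQ (P : Program) (S : Set Lit)
    (h : ∀ nr ∈ reduct P S, NFRule.sat S nr) :
    ∀ nr ∈ reduct ((P \ {r ∈ P | r.headPos = ∅}) ∪ shiftRule '' {r ∈ P | r.headPos = ∅}) S,
      NFRule.sat S nr := by
  rintro nr ⟨r, hr, hhn, hbn, rfl⟩
  rcases hr with ⟨hrP, -⟩ | ⟨r0, ⟨hr0P, hr0h⟩, rfl⟩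
  · exact h _ ⟨r, hrP, hhn, hbn, rfl⟩
  · simp only [shiftRule] at hbn ⊢
    intro hb
    have hb' : r0.headNeg ∪ r0.bodyPos ⊆ S := hb
    have h1 : r0.headNeg ⊆ S := (Set.union_subset_iff.mp hb').1
    have h2 : r0.bodyPos ⊆ S := (Set.union_subset_iff.mp hb').2
    have := h ⟨r0.headPos, r0.bodyPos⟩ ⟨r0, hr0P, h1, hbn, rfl⟩ h2
    rw [hr0h] at this
    simp at this

lemma satQ_to_satP (P : Program) (S : Set Lit)
    (h : ∀ nr ∈ reduct ((P \ {r ∈ P | r.headPos = ∅}) ∪ shiftRule '' {r ∈ P | r.headPos = ∅}) S,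
      NFRule.sat S nr) :
    ∀ nr ∈ reduct P S, NFRule.sat S nr := by
  rintro nr ⟨r, hr, hhn, hbn, rfl⟩
  by_cases hh : r.headPos = ∅
  · intro hb
    exfalso
    have hmem : shiftRule r ∈ (P \ {r ∈ P | r.headPos = ∅}) ∪ shiftRule '' {r ∈ P | r.headPos = ∅} :=
      Or.inr ⟨r, ⟨hr, hh⟩, rfl⟩
    have := h ⟨(shiftRule r).headPos, (shiftRule r).bodyPos⟩
      ⟨shiftRule r, hmem, by simp [shiftRule], by simpa [shiftRule] using hbn, rfl⟩
    simp only [shiftRule] at this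
    exact absurd (this (Set.union_subset hhn hb)) (by simp)
  · exact h _ ⟨r, Or.inl ⟨hr, fun hc => hh hc.2⟩, hhn, hbn, rfl⟩

lemma satT_P_to_Q (P : Program) (S T : Set Lit) (hTS : T ⊆ S)
    (hS : ∀ nr ∈ reduct P S, NFRule.sat S nr)
    (hT : ∀ nr ∈ reduct P S, NFRule.sat T nr) :
    ∀ nr ∈ reduct ((P \ {r ∈ P | r.headPos = ∅}) ∪ shiftRule '' {r ∈ P | r.headPos = ∅}) S,
      NFRule.sat T nr := by
  rintro nr hnr
  obtain ⟨r, hr, hhn, hbn, rfl⟩ := hnr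
  rcases hr with ⟨hrP, -⟩ | ⟨r0, ⟨hr0P, hr0h⟩, rfl⟩
  · exact hT _ ⟨r, hrP, hhn, hbn, rfl⟩
  · exact sat_mono_empty _ (by simp [shiftRule]) hTS
      (satP_to_satQ P S hS _ ⟨shiftRule r0, Or.inr ⟨r0, ⟨hr0P, hr0h⟩, rfl⟩, hhn, hbn, rfl⟩)

lemma satT_Q_to_P (P : Program) (S T : Set Lit) (hTS : T ⊆ S)
    (hS : ∀ nr ∈ reduct ((P \ {r ∈ P | r.headPos = ∅}) ∪ shiftRule '' {r ∈ P | r.headPos = ∅}) S,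
      NFRule.sat S nr)
    (hT : ∀ nr ∈ reduct ((P \ {r ∈ P | r.headPos = ∅}) ∪ shiftRule '' {r ∈ P | r.headPos = ∅}) S,
      NFRule.sat T nr) :
    ∀ nr ∈ reduct P S, NFRule.sat T nr := by
  rintro nr hnr
  obtain ⟨r, hr, hhn, hbn, rfl⟩ := hnr
  by_cases hh : r.headPos = ∅
  · exact sat_mono_empty _ hh hTS (satQ_to_satP P S hS _ ⟨r, hr, hhn, hbn, rfl⟩)
  · exact hT _ ⟨r, Or.inl ⟨hr, fun hc => hh hc.2⟩, hhn, hbn, rfl⟩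

/-- replacing all rules with empty positive head by their shifted
    constraints preserves the answer sets. -/
theorem shift_preserves_answer_sets (P : Program) :
    ∀ S : Set Lit,
      isAnswerSet P S ↔
        isAnswerSet ((P \ {r ∈ P | r.headPos = ∅}) ∪ shiftRule '' {r ∈ P | r.headPos = ∅}) S := by
  
  intro S
  constructor
  · rintro ⟨⟨hsat, hcomp⟩, hmin⟩
    refine ⟨⟨satP_to_satQ P S hsat, hcomp⟩, ?_⟩
    intro T ⟨hTsat, hTcomp⟩ hTS
    exact hmin T ⟨satT_Q_to_P P S T hTS (satP_to_satQ P S hsat) hTsat, hTcomp⟩ hTS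
  · rintro ⟨⟨hsat, hcomp⟩, hmin⟩
    refine ⟨⟨satQ_to_satP P S hsat, hcomp⟩, ?_⟩
    intro T ⟨hTsat, hTcomp⟩ hTS
    exact hmin T ⟨satT_P_to_Q P S T hTS (satQ_to_satP P S hsat) hTsat, hTcomp⟩ hTS
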